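/- For k > 2, if G - xy is k-colorable and G is not k-colorable, then for every r with 3 ≤ r ≤ k, the graph G - xy contains at least (r-1)!/2 cycles whose lengths are divisible by r. -/

import Mathlib

/-- `H` is a cycle subgraph of `G` of length `n`. -/
def SimpleGraph.IsCycleSubgraph {V : Type*} (G : SimpleGraph V) (H : G.Subgraph) (n : ℕ) : Prop :=
  ∃ (v : V) (w : G.Walk v v), w.IsCycle ∧ w.length = n ∧ w.toSubgraph = H

/-!
Fix a proper colouring `C` of `G - xy`; as `G` is not `k`-colourable, every `k`-colouring of
`G - xy` gives `x` and `y` the same colour. Let `e 0 = C x, e 1, …, e (r - 1)` be distinct colours,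
indexed by `ZMod r`. Shifting `e i ↦ e (i + 1)` on the vertices reachable from `x` along walks whose
edges all go from a colour `e i` to `e (i + 1)` is again a proper colouring, so `y` must be
reachable from `x` in this way, and vice versa. The resulting closed walk contains a cycle of the
same kind; its length is divisible by `r`, and it uses every colour step `e i → e (i + 1)`, so it
determines the cyclic order `e` up to reversal. There are `(r - 1)!` orders with `e 0 = C x`.
-/

namespace ZMod

variable {r : ℕ}

lemma two_ne_zero_of_three_le (hr : 3 ≤ r) : (2 : ZMod r) ≠ 0 := by
  rw [← Nat.cast_ofNat, Ne, natCast_eq_zero_iff]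
  intro h
  have := Nat.le_of_dvd two_pos h
  omega

lemma perm_eq_id_or_neg_of_sub_eq_one_or_neg_one [NeZero r] (h2 : (2 : ZMod r) ≠ 0)
    (φ : Equiv.Perm (ZMod r)) (h0 : φ 0 = 0)
    (hstep : ∀ i, φ (i + 1) - φ i = 1 ∨ φ (i + 1) - φ i = -1) :
    (∀ i, φ i = i) ∨ ∀ i, φ i = -i := by
  set δ := φ 1
  have hδ : δ = 1 ∨ δ = -1 := by simpa [h0] using hstep 0
  -- two opposite consecutive steps would give `φ (n + 2) = φ n`
  have hconst (n : ℕ) : φ (n + 1) - φ n = δ := by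
    induction n with
    | zero => simp [h0, δ]
    | succ n ih =>
      push_cast
      have hne : φ (n + 1 + 1) ≠ φ n := fun h =>
        h2 (by simpa [add_assoc, one_add_one_eq_two] using φ.injective h)
      have : φ (n + 1 + 1) - φ (n + 1) = δ ∨ φ (n + 1 + 1) - φ (n + 1) = -δ := by
        rcases hstep (n + 1) with h | h <;> rcases hδ with hδ | hδ <;> simp [h, hδ]
      exact this.resolve_right fun h => hne (by linear_combination h + ih)
  have hval (n : ℕ) : φ n = n * δ := by
    induction n with
    | zero => simpa using h0
    | succ n ih => push_cast; linear_combination hconst n + ih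
  refine hδ.imp (fun hδ i => ?_) (fun hδ i => ?_) <;>
    rw [← natCast_zmod_val i, hval, hδ] <;> ring

lemma perm_eq_or_eq_neg_of_sym2_eq [NeZero r] (h2 : (2 : ZMod r) ≠ 0)
    {σ τ : Equiv.Perm (ZMod r)} (h0 : σ 0 = τ 0)
    (h : ∀ i, ∃ j, s(σ i, σ (i + 1)) = s(τ j, τ (j + 1))) :
    (∀ i, τ i = σ i) ∨ ∀ i, τ i = σ (-i) := by
  set φ := σ.trans τ.symm
  have hφ (i : ZMod r) : φ i = τ.symm (σ i) := rfl
  have hstep (i : ZMod r) : φ (i + 1) - φ i = 1 ∨ φ (i + 1) - φ i = -1 := by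
    obtain ⟨j, hj⟩ := h i
    have hj' := congrArg (Sym2.map τ.symm) hj
    simp only [Sym2.map_mk, Equiv.symm_apply_apply, ← hφ] at hj'
    rcases Sym2.eq_iff.1 hj' with ⟨h₁, h₂⟩ | ⟨h₁, h₂⟩
    · left; rw [h₁, h₂]; ring
    · right; rw [h₁, h₂]; ring
  refine (perm_eq_id_or_neg_of_sub_eq_one_or_neg_one h2 φ
    (by rw [hφ, h0, Equiv.symm_apply_apply]) hstep).imp (fun hid i => ?_) (fun hneg i => ?_)
  · exact ((Equiv.symm_apply_eq τ).1 (hid i)).symm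
  · exact ((Equiv.symm_apply_eq τ).1 (by rw [← hφ, hneg, neg_neg])).symm

end ZMod

lemma Equiv.Perm.card_subtype_apply_eq_self {α : Type*} [Fintype α] [DecidableEq α] (a : α) :
    Fintype.card {σ : Equiv.Perm α // σ a = a} = (Fintype.card α - 1).factorial := by
  have e : Equiv.Perm {b // b ≠ a} ≃ {σ : Equiv.Perm α // σ a = a} :=
    (Equiv.Perm.subtypeEquivSubtypePerm _).trans (Equiv.subtypeEquivRight fun σ => by simp)
  rw [← Fintype.card_congr e, Fintype.card_perm, Fintype.card_subtype_compl,
    Fintype.card_subtype_eq]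

lemma Function.exists_injective_apply_eq {β γ : Type*} [Fintype β] [Fintype γ]
    (h : Fintype.card β ≤ Fintype.card γ) (b : β) (g : γ) :
    ∃ f : β → γ, f.Injective ∧ f b = g := by
  classical
  obtain ⟨f⟩ := Function.Embedding.nonempty_of_card_le h
  exact ⟨Equiv.swap (f b) g ∘ f, (Equiv.injective _).comp f.injective, by simp⟩

namespace SimpleGraph.Walk

variable {V α : Type*} {G : SimpleGraph V} {r : ℕ} {c : V → α} {e : ZMod r → α}

def FollowsColorCycle (c : V → α) (e : ZMod r → α) {u v : V} (p : G.Walk u v) : Prop :=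
  ∀ d ∈ p.darts, ∃ i, c d.fst = e i ∧ c d.snd = e (i + 1)

@[simp]
lemma followsColorCycle_nil {u : V} : (nil : G.Walk u u).FollowsColorCycle c e := by
  simp [FollowsColorCycle]

@[simp]
lemma followsColorCycle_cons_iff {u v w : V} (h : G.Adj u v) (p : G.Walk v w) :
    (cons h p).FollowsColorCycle c e ↔
      (∃ i, c u = e i ∧ c v = e (i + 1)) ∧ p.FollowsColorCycle c e := by
  simp [FollowsColorCycle]

@[simp]
lemma followsColorCycle_append_iff {u v w : V} (p : G.Walk u v) (q : G.Walk v w) :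
    (p.append q).FollowsColorCycle c e ↔ p.FollowsColorCycle c e ∧ q.FollowsColorCycle c e := by
  simp [FollowsColorCycle, or_imp, forall_and]

lemma FollowsColorCycle.mono {u v u' v' : V} {p : G.Walk u v} {q : G.Walk u' v'}
    (hp : p.FollowsColorCycle c e) (h : q.darts ⊆ p.darts) : q.FollowsColorCycle c e :=
  fun d hd => hp d (h hd)

lemma FollowsColorCycle.color_end (he : e.Injective) {u v : V} {p : G.Walk u v}
    (hp : p.FollowsColorCycle c e) {a : ZMod r} (ha : c u = e a) :
    c v = e (a + p.length) := by
  induction p generalizing a with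
  | nil => simpa using ha
  | cons h p ih =>
    obtain ⟨⟨i, hi, hi'⟩, hp⟩ := (followsColorCycle_cons_iff h p).1 hp
    obtain rfl : i = a := he (hi.symm.trans ha)
    rw [ih hp hi', length_cons]
    congr 1
    push_cast
    ring

lemma FollowsColorCycle.exists_dart_of_lt (he : e.Injective) {u v : V} {p : G.Walk u v}
    (hp : p.FollowsColorCycle c e) {a : ZMod r} (ha : c u = e a) {j : ℕ} (hj : j < p.length) :
    ∃ d ∈ p.darts, c d.fst = e (a + j) ∧ c d.snd = e (a + j + 1) := by
  induction p generalizing a j with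
  | nil => simp at hj
  | cons h p ih =>
    obtain ⟨⟨i, hi, hi'⟩, hp⟩ := (followsColorCycle_cons_iff h p).1 hp
    obtain rfl : i = a := he (hi.symm.trans ha)
    cases j with
    | zero => exact ⟨⟨(_, _), h⟩, by simp, by simpa using hi, by simpa using hi'⟩
    | succ j =>
      obtain ⟨d, hd, hd₁, hd₂⟩ := ih hp hi' (by simpa using hj)
      refine ⟨d, by simp [hd], ?_, ?_⟩
      · rw [hd₁]; congr 1; push_cast; ring
      · rw [hd₂]; congr 1; push_cast; ring

lemma FollowsColorCycle.exists_eq_of_not_nil {u v : V} {p : G.Walk u v}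
    (hp : p.FollowsColorCycle c e) (hnil : ¬ p.Nil) : ∃ a, c u = e a := by
  cases p with
  | nil => simp at hnil
  | cons h p => exact ((followsColorCycle_cons_iff h p).1 hp).1.imp fun _ => And.left

lemma FollowsColorCycle.dvd_length (he : e.Injective) {u : V} {p : G.Walk u u}
    (hp : p.FollowsColorCycle c e) : r ∣ p.length := by
  by_cases hnil : p.Nil
  · simp [hnil.length_eq_zero]
  obtain ⟨a, ha⟩ := hp.exists_eq_of_not_nil hnil
  have := he ((hp.color_end he ha).symm.trans ha)
  rwa [add_eq_left, ZMod.natCast_eq_zero_iff] at this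

lemma FollowsColorCycle.exists_dart [NeZero r] (he : e.Injective) {u : V} {p : G.Walk u u}
    (hp : p.FollowsColorCycle c e) (hnil : ¬ p.Nil) (i : ZMod r) :
    ∃ d ∈ p.darts, c d.fst = e i ∧ c d.snd = e (i + 1) := by
  obtain ⟨a, ha⟩ := hp.exists_eq_of_not_nil hnil
  have hr : r ≤ p.length := Nat.le_of_dvd (not_nil_iff_lt_length.1 hnil) (hp.dvd_length he)
  obtain ⟨d, hd, hd₁, hd₂⟩ := hp.exists_dart_of_lt he ha ((i - a).val_lt.trans_le hr)
  rw [ZMod.natCast_zmod_val, add_sub_cancel] at hd₁ hd₂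
  exact ⟨d, hd, hd₁, hd₂⟩

lemma FollowsColorCycle.exists_of_mem_edges {u v a b : V} {p : G.Walk u v}
    (hp : p.FollowsColorCycle c e) (h : s(a, b) ∈ p.edges) :
    ∃ i, s(c a, c b) = s(e i, e (i + 1)) := by
  obtain ⟨d, hd, hde⟩ := List.mem_map.1 h
  obtain ⟨i, hi, hi'⟩ := hp d hd
  refine ⟨i, ?_⟩
  rw [← hi, ← hi', ← Sym2.map_mk, ← Sym2.map_mk]
  exact congrArg (Sym2.map c) hde.symm

/-- A closed walk following the colour cycle contains a cycle following it: bypassing the tail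
of the walk gives a path, and the first edge cannot reappear on it, backwards because the colours
would have to go `i → i + 1 → i + 2 = i`, forwards because the path would revisit its start. -/
lemma FollowsColorCycle.exists_isCycle (h2 : (2 : ZMod r) ≠ 0) (he : e.Injective) {u : V}
    {p : G.Walk u u} (hp : p.FollowsColorCycle c e) (hnil : ¬ p.Nil) :
    ∃ (z : V) (q : G.Walk z z), q.IsCycle ∧ q.FollowsColorCycle c e := by
  classical
  cases p with
  | nil => simp at hnil
  | @cons _ v _ h p =>
    obtain ⟨⟨i, hi, hi'⟩, hp⟩ := (followsColorCycle_cons_iff h p).1 hp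
    have hq := hp.mono p.darts_bypass_subset_darts
    refine ⟨u, cons h p.bypass, (cons_isCycle_iff _ h).2 ⟨p.bypass_isPath, fun hmem => ?_⟩,
      (followsColorCycle_cons_iff h _).2 ⟨⟨i, hi, hi'⟩, hq⟩⟩
    obtain ⟨d, hd, hde⟩ := List.mem_map.1 hmem
    rcases Sym2.eq_iff.1 hde with ⟨-, hv⟩ | ⟨hv, hu⟩
    · have hnodup := p.bypass_isPath.support_nodup
      rw [← cons_tail_support, List.nodup_cons, ← map_snd_darts] at hnodup
      have hmem := List.mem_map_of_mem (f := (·.snd)) hd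
      rw [hv] at hmem
      exact hnodup.1 hmem
    · obtain ⟨j, hj, hj'⟩ := hq d hd
      obtain rfl : j = i + 1 := he (by rw [← hj, hv, hi'])
      refine h2 (add_left_cancel (a := i) ?_)
      rw [add_zero, ← one_add_one_eq_two, ← add_assoc]
      exact he (by rw [← hj', hu, hi])

lemma FollowsColorCycle.perm_eq_or_eq_neg_of_toSubgraph_eq [NeZero r]
    (h2 : (2 : ZMod r) ≠ 0) {ι : ZMod r → α} (hι : ι.Injective)
    {σ τ : Equiv.Perm (ZMod r)} (h0 : σ 0 = τ 0) {u v : V} {p : G.Walk u u} {q : G.Walk v v}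
    (hp : p.FollowsColorCycle c (ι ∘ σ)) (hq : q.FollowsColorCycle c (ι ∘ τ)) (hnil : ¬ p.Nil)
    (hpq : p.toSubgraph = q.toSubgraph) :
    (∀ i, τ i = σ i) ∨ ∀ i, τ i = σ (-i) := by
  refine ZMod.perm_eq_or_eq_neg_of_sym2_eq h2 h0 fun i => ?_
  obtain ⟨d, hd, hd₁, hd₂⟩ := hp.exists_dart (hι.comp σ.injective) hnil i
  obtain ⟨j, hj⟩ := hq.exists_of_mem_edges
    (q.mem_edges_toSubgraph.1 (hpq ▸ p.mem_edges_toSubgraph.2 (List.mem_map_of_mem hd)))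
  refine ⟨j, Sym2.map.injective hι ?_⟩
  simpa [hd₁, hd₂] using hj

end SimpleGraph.Walk

namespace SimpleGraph

variable {V α : Type*} {G : SimpleGraph V} {r : ℕ} {e : ZMod r → α}

open Walk

lemma Coloring.apply_eq_of_not_nonempty_coloring {x y : V} (hG : ¬ Nonempty (G.Coloring α))
    (C : (G.deleteEdges {s(x, y)}).Coloring α) : C x = C y := by
  by_contra hne
  refine hG ⟨Coloring.mk C fun {u v} huv => ?_⟩
  by_cases huv' : s(u, v) = s(x, y)
  · rcases Sym2.eq_iff.1 huv' with ⟨rfl, rfl⟩ | ⟨rfl, rfl⟩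
    exacts [hne, Ne.symm hne]
  · exact C.valid ((deleteEdges_adj ..).2 ⟨huv, huv'⟩)

/-- Shifting `e i ↦ e (i + 1)` on the vertices reachable from `s` along walks following the
colour cycle keeps the colouring proper: an edge leaving that set from a vertex of colour `e i`
cannot end at colour `e (i + 1)`, or its endpoint would be reachable too. -/
lemma Coloring.exists_shift (C : G.Coloring α) (he : e.Injective) {s : V} (hs : C s = e 0) :
    ∃ C' : G.Coloring α, C' s = e 1 ∧
      ∀ v, (¬ ∃ p : G.Walk s v, p.FollowsColorCycle C e) → C' v = C v := by
  classical
  set R := {v | ∃ p : G.Walk s v, p.FollowsColorCycle C e}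
  set π : Equiv.Perm α := (Equiv.addRight 1).extendDomain (Equiv.ofInjective e he)
  have hπ (i : ZMod r) : π (e i) = e (i + 1) := by
    simpa using Equiv.Perm.extendDomain_apply_image (Equiv.addRight (1 : ZMod r))
      (Equiv.ofInjective e he) i
  have hR {v : V} (hv : v ∈ R) : ∃ i, C v = e i := by
    obtain ⟨p, hp⟩ := hv
    exact ⟨_, hp.color_end he hs⟩
  have hleave {u v : V} (huv : G.Adj u v) (hu : u ∈ R) (hv : v ∉ R) : π (C u) ≠ C v := by
    obtain ⟨i, hi⟩ := hR hu
    obtain ⟨p, hp⟩ := hu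
    intro h
    rw [hi, hπ] at h
    exact hv ⟨p.concat huv, by simpa [concat] using ⟨hp, i, hi, h.symm⟩⟩
  refine ⟨Coloring.mk (fun v => if v ∈ R then π (C v) else C v) fun {u v} huv => ?_, ?_, ?_⟩
  · by_cases hu : u ∈ R <;> by_cases hv : v ∈ R <;> simp only [hu, hv, if_true, if_false]
    · exact π.injective.ne (C.valid huv)
    · exact hleave huv hu hv
    · exact (hleave huv.symm hv hu).symm
    · exact C.valid huv
  · change ite _ _ _ = _
    rw [if_pos ⟨nil, followsColorCycle_nil⟩, hs, hπ, zero_add]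
  · exact fun v hv => if_neg hv

lemma Coloring.exists_walk_followsColorCycle (h1 : (1 : ZMod r) ≠ 0) (he : e.Injective)
    (C : G.Coloring α) {s t : V} (hst : ∀ C' : G.Coloring α, C' s = C' t) (hs : C s = e 0) :
    ∃ p : G.Walk s t, p.FollowsColorCycle C e := by
  by_contra h
  obtain ⟨C', hC's, hC't⟩ := C.exists_shift he hs
  have h10 := hst C'
  rw [hC's, hC't t h, ← hst C, hs] at h10
  exact h1 (he h10)

lemma Coloring.exists_isCycle_followsColorCycle (h2 : (2 : ZMod r) ≠ 0) (he : e.Injective)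
    (C : G.Coloring α) {x y : V} (hxy : x ≠ y) (hC : ∀ C' : G.Coloring α, C' x = C' y)
    (hx : C x = e 0) : ∃ (z : V) (q : G.Walk z z), q.IsCycle ∧ q.FollowsColorCycle C e := by
  have h1 : (1 : ZMod r) ≠ 0 := fun h => h2 (by rw [← one_add_one_eq_two, h, add_zero])
  obtain ⟨p, hp⟩ := C.exists_walk_followsColorCycle h1 he hC hx
  obtain ⟨q, hq⟩ := C.exists_walk_followsColorCycle h1 he (fun C' => (hC C').symm)
    (by rw [← hC C, hx])
  exact ((followsColorCycle_append_iff p q).2 ⟨hp, hq⟩).exists_isCycle h2 he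
    fun hnil => hxy (nil_append_iff.1 hnil).1.eq

theorem Coloring.factorial_le_two_mul_ncard_isCycleSubgraph [Finite V] [NeZero r]
    (h2 : (2 : ZMod r) ≠ 0) (C : G.Coloring α) {x y : V} (hxy : x ≠ y)
    (hC : ∀ C' : G.Coloring α, C' x = C' y) {ι : ZMod r → α} (hι : ι.Injective)
    (hx : C x = ι 0) :
    (r - 1).factorial ≤ 2 * {H : G.Subgraph | ∃ n, r ∣ n ∧ G.IsCycleSubgraph H n}.ncard := by
  classical
  have hcycle (σ : {σ : Equiv.Perm (ZMod r) // σ 0 = 0}) :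
      ∃ (z : V) (q : G.Walk z z), q.IsCycle ∧ q.FollowsColorCycle C (ι ∘ σ.1) :=
    C.exists_isCycle_followsColorCycle h2 (hι.comp σ.1.injective) hxy hC (by simp [σ.2, hx])
  choose z q hq hfol using hcycle
  set T := {H : G.Subgraph | ∃ n, r ∣ n ∧ G.IsCycleSubgraph H n}
  have hmaps : ∀ σ ∈ Finset.univ, (q σ).toSubgraph ∈ T.toFinite.toFinset := fun σ _ => by
    simpa [T] using ⟨_, (hfol σ).dvd_length (hι.comp σ.1.injective), z σ, q σ, hq σ, rfl, rfl⟩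
  have hfiber : ∀ H ∈ T.toFinite.toFinset,
      (Finset.univ.filter fun σ => (q σ).toSubgraph = H).card ≤ 2 := by
    intro H _
    rcases (Finset.univ.filter fun σ => (q σ).toSubgraph = H).eq_empty_or_nonempty with h | ⟨σ, hσ⟩
    · simp [h]
    refine (Finset.card_le_card (t := {σ, ⟨(Equiv.neg _).trans σ.1, by simp [σ.2]⟩})
      fun τ hτ => ?_).trans Finset.card_le_two
    simp only [Finset.mem_filter, Finset.mem_univ, true_and] at hσ hτ
    rcases (hfol σ).perm_eq_or_eq_neg_of_toSubgraph_eq h2 hι (σ.2.trans τ.2.symm) (hfol τ)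
      (hq σ).not_nil (hσ.trans hτ.symm) with h | h <;>
    simp [Subtype.ext_iff, Equiv.ext_iff, h]
  calc (r - 1).factorial
      = (Finset.univ : Finset {σ : Equiv.Perm (ZMod r) // σ 0 = 0}).card := by
        rw [Finset.card_univ, Equiv.Perm.card_subtype_apply_eq_self, ZMod.card]
    _ ≤ 2 * T.toFinite.toFinset.card := Finset.card_le_mul_card_image_of_maps_to hmaps 2 hfiber
    _ = 2 * T.ncard := by rw [Set.ncard_eq_toFinset_card]

end SimpleGraph

theorem stmt5_general {V : Type*} [Fintype V] (G : SimpleGraph V) (x y : V)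
    (k : ℕ)
    (hdel : (G.deleteEdges {s(x, y)}).Colorable k) (hG : ¬ G.Colorable k)
    (r : ℕ) (hr3 : 3 ≤ r) (hrk : r ≤ k) :
    Nat.factorial (r - 1) / 2 ≤
      {H : (G.deleteEdges {s(x, y)}).Subgraph |
        ∃ n, r ∣ n ∧ (G.deleteEdges {s(x, y)}).IsCycleSubgraph H n}.ncard := by
  have hxy : x ≠ y := by
    rintro rfl
    exact hG (by simpa using hdel)
  obtain ⟨C⟩ := hdel
  have : NeZero r := ⟨by omega⟩
  obtain ⟨ι, hι, hι0⟩ := Function.exists_injective_apply_eq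
    (by simpa using hrk : Fintype.card (ZMod r) ≤ Fintype.card (Fin k)) 0 (C x)
  have hcount := C.factorial_le_two_mul_ncard_isCycleSubgraph
    (ZMod.two_ne_zero_of_three_le hr3) hxy (fun C' => C'.apply_eq_of_not_nonempty_coloring hG)
    hι hι0.symm
  omega

theorem stmt5 {V : Type*} [Fintype V] (G : SimpleGraph V) (x y : V) (hxy : G.Adj x y)
    (k : ℕ) (hk : 2 < k)
    (hdel : (G.deleteEdges {s(x, y)}).Colorable k) (hG : ¬ G.Colorable k)
    (r : ℕ) (hr3 : 3 ≤ r) (hrk : r ≤ k) :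
    Nat.factorial (r - 1) / 2 ≤
      {H : (G.deleteEdges {s(x, y)}).Subgraph |
        ∃ n, r ∣ n ∧ (G.deleteEdges {s(x, y)}).IsCycleSubgraph H n}.ncard :=
  stmt5_general G x y k hdel hG r hr3 hrk
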